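/- Given the estimate ‖δ_{t+s,t}(f) − δ_s(f)‖_∞ ≤ m(t) for all valid s, t with m nondecreasing, m(0)=0, and uniform boundedness ‖δ_t(f)‖_∞ ≤ C₀, the Cauchy-type estimate ‖δ_t(f) − δ_h(f)‖_∞ ≤ m(t) + 2C₀ r / t holds, where N = ⌊t/h⌋ and r = t − N h. -/

import Mathlib

/-!
Write `t = N h + r` with `N = ⌊t / h⌋₊`. The Markov decomposition expresses `δ_{a+b}` as the
convex combination `(a/(a+b)) δ_a + (b/(a+b)) δ_{a+b,a}`. Along the grid `k h` both terms are
`m(t)`-close to `δ_h`, so by induction `‖δ_{Nh} − δ_h‖ ≤ m(t)`. The last step, of length `r`,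
adds the term `‖δ_{t,Nh} − δ_h‖ ≤ m(t) + 2C₀`, which enters with weight `r / t`.
-/

open BoundedContinuousFunction

section

variable {E : Type*} [NormedAddCommGroup E] [NormedSpace ℝ E]

lemma norm_smul_add_smul_sub_le {μ ν : ℝ} (hμ : 0 ≤ μ) (hν : 0 ≤ ν) (hμν : μ + ν = 1)
    (x y z : E) : ‖μ • x + ν • y - z‖ ≤ μ * ‖x - z‖ + ν * ‖y - z‖ := by
  have hsplit : μ • x + ν • y - z = μ • (x - z) + ν • (y - z) := by
    nth_rewrite 1 [← one_smul ℝ z]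
    rw [← hμν, add_smul, smul_sub, smul_sub]
    abel
  calc ‖μ • x + ν • y - z‖ ≤ ‖μ • (x - z)‖ + ‖ν • (y - z)‖ := hsplit ▸ norm_add_le _ _
    _ = μ * ‖x - z‖ + ν * ‖y - z‖ := by rw [norm_smul_of_nonneg hμ, norm_smul_of_nonneg hν]

/-- In the paper's notation `δ s = δ_s(f)` and `δ₂ s a = δ_{a+s,a}(f)`. -/
def HasMarkovDecomposition (T : ℝ) (δ : ℝ → E) (δ₂ : ℝ → ℝ → E) : Prop :=
  ∀ a b : ℝ, 0 < a → 0 < b → a + b ≤ T → δ (a + b) = (a / (a + b)) • δ a + (b / (a + b)) • δ₂ b a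

variable {T M : ℝ} {δ : ℝ → E} {δ₂ : ℝ → ℝ → E}

lemma HasMarkovDecomposition.norm_sub_le (hδ : HasMarkovDecomposition T δ δ₂) {a b : ℝ}
    (ha : 0 < a) (hb : 0 < b) (hab : a + b ≤ T) (z : E) :
    ‖δ (a + b) - z‖ ≤ a / (a + b) * ‖δ a - z‖ + b / (a + b) * ‖δ₂ b a - z‖ := by
  rw [hδ a b ha hb hab]
  refine norm_smul_add_smul_sub_le (by positivity) (by positivity) ?_ _ _ _
  field_simp

lemma HasMarkovDecomposition.norm_sub_le_of_le (hδ : HasMarkovDecomposition T δ δ₂) {a b : ℝ}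
    (ha : 0 < a) (hb : 0 < b) (hab : a + b ≤ T) {z : E} {A B : ℝ}
    (hA : ‖δ a - z‖ ≤ A) (hB : ‖δ₂ b a - z‖ ≤ B) :
    ‖δ (a + b) - z‖ ≤ a / (a + b) * A + b / (a + b) * B := by
  refine (hδ.norm_sub_le ha hb hab z).trans ?_
  gcongr

lemma HasMarkovDecomposition.norm_natCast_mul_sub_le (hδ : HasMarkovDecomposition T δ δ₂)
    (hM : 0 ≤ M) (hest : ∀ s u : ℝ, 0 < s → 0 ≤ u → s + u ≤ T → ‖δ₂ s u - δ s‖ ≤ M)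
    {h : ℝ} (hh : 0 < h) {k : ℕ} (hk : 1 ≤ k) (hkh : k * h ≤ T) :
    ‖δ (k * h) - δ h‖ ≤ M := by
  induction k, hk using Nat.le_induction with
  | base => simpa using hM
  | succ k hk ih =>
    have hkh' : (k : ℝ) * h + h ≤ T := by push_cast at hkh; linarith
    have hkpos : 0 < (k : ℝ) * h := mul_pos (by exact_mod_cast hk) hh
    have hstep := hδ.norm_sub_le_of_le hkpos hh hkh' (ih (by linarith))
      (hest h _ hh hkpos.le (by linarith))
    calc ‖δ ((k + 1 : ℕ) * h) - δ h‖ = ‖δ (k * h + h) - δ h‖ := by push_cast; ring_nf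
      _ ≤ k * h / (k * h + h) * M + h / (k * h + h) * M := hstep
      _ = M := by field_simp

lemma HasMarkovDecomposition.norm_add_sub_le (hδ : HasMarkovDecomposition T δ δ₂) {a b C : ℝ}
    (ha : 0 < a) (hb : 0 < b) (hab : a + b ≤ T) {z : E} (hA : ‖δ a - z‖ ≤ M)
    (hB : ‖δ₂ b a - δ b‖ ≤ M) (hδb : ‖δ b‖ ≤ C) (hz : ‖z‖ ≤ C) :
    ‖δ (a + b) - z‖ ≤ M + 2 * C * b / (a + b) := by
  have hB' : ‖δ₂ b a - z‖ ≤ M + 2 * C := by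
    calc ‖δ₂ b a - z‖ ≤ ‖δ₂ b a - δ b‖ + ‖δ b - z‖ := norm_sub_le_norm_sub_add_norm_sub _ _ _
      _ ≤ M + (‖δ b‖ + ‖z‖) := by gcongr; exact _root_.norm_sub_le _ _
      _ ≤ M + 2 * C := by linarith
  calc ‖δ (a + b) - z‖ ≤ a / (a + b) * M + b / (a + b) * (M + 2 * C) :=
        hδ.norm_sub_le_of_le ha hb hab hA hB'
    _ = M + 2 * C * b / (a + b) := by field_simp; ring

end

theorem stmt_12_general {d : ℕ} (Tmax : ℝ)
    (δ : ℝ → ((Fin d → ℝ) →ᵇ ℝ))       -- δ t = δ_t(f)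
    (δ2 : ℝ → ℝ → ((Fin d → ℝ) →ᵇ ℝ))  -- δ2 s t = δ_{t+s,t}(f)
    (C₀ : ℝ)
    (hbound : ∀ t : ℝ, 0 < t → t ≤ Tmax → ‖δ t‖ ≤ C₀)
    (m : ℝ → ℝ) (hmnn : ∀ t, 0 ≤ m t)
    (hmono : MonotoneOn m (Set.Icc 0 Tmax))
    (hest : ∀ s t : ℝ, 0 < s → 0 ≤ t → s + t ≤ Tmax → ‖δ2 s t - δ s‖ ≤ m t)
    (hdecomp : ∀ a b : ℝ, 0 < a → 0 < b → a + b ≤ Tmax →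
      δ (a + b) = (a / (a + b)) • δ a + (b / (a + b)) • δ2 b a) :
    ∀ t h : ℝ, 0 < h → h ≤ t → t ≤ Tmax →
      ‖δ t - δ h‖ ≤ m t + 2 * C₀ * (t - (⌊t / h⌋₊ : ℝ) * h) / t := by
  intro t h hh hht htT
  have hδ : HasMarkovDecomposition t δ δ2 := fun a b ha hb hab => hdecomp a b ha hb (hab.trans htT)
  have hest_t : ∀ s u : ℝ, 0 < s → 0 ≤ u → s + u ≤ t → ‖δ2 s u - δ s‖ ≤ m t :=
    fun s u hs hu hsu => (hest s u hs hu (hsu.trans htT)).trans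
      (hmono ⟨hu, by linarith⟩ ⟨by linarith, htT⟩ (by linarith))
  set N := ⌊t / h⌋₊
  have hN : 1 ≤ N := Nat.le_floor (by rwa [Nat.cast_one, le_div_iff₀ hh, one_mul])
  have hNh : (N : ℝ) * h ≤ t :=
    (le_div_iff₀ hh).mp (Nat.floor_le (div_nonneg (hh.le.trans hht) hh.le))
  have hgrid := hδ.norm_natCast_mul_sub_le (hmnn t) hest_t hh hN hNh
  obtain hr | hr := (sub_nonneg.mpr hNh).eq_or_lt
  · have htN : (N : ℝ) * h = t := by linarith
    rw [htN] at hgrid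
    simpa [← hr] using hgrid
  have hNpos : 0 < (N : ℝ) * h := mul_pos (by exact_mod_cast hN) hh
  have key := hδ.norm_add_sub_le hNpos hr (by linarith) hgrid
    (hest_t _ _ hr hNpos.le (by linarith)) (hbound _ hr (by linarith)) (hbound h hh (by linarith))
  rwa [add_sub_cancel] at key

/-- Cauchy-type estimate for the difference quotients of the semigroup: given the consistency
estimate `‖δ_{t+s,t} − δ_s‖ ≤ m(t)`, uniform boundedness `‖δ_t‖ ≤ C₀`, and the Markov
decomposition `δ_{a+b} = (a/(a+b))δ_a + (b/(a+b))δ_{a+b,a}`, one has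
`‖δ_t − δ_h‖ ≤ m(t) + 2C₀ r / t` with `N = ⌊t/h⌋` and `r = t − Nh`. -/
theorem stmt_12 {d : ℕ} (Tmax : ℝ) (hT : 0 < Tmax)
    (δ : ℝ → ((Fin d → ℝ) →ᵇ ℝ))       -- δ t = δ_t(f)
    (δ2 : ℝ → ℝ → ((Fin d → ℝ) →ᵇ ℝ))  -- δ2 s t = δ_{t+s,t}(f)
    (C₀ : ℝ) (hC₀ : 0 ≤ C₀)
    (hbound : ∀ t : ℝ, 0 < t → t ≤ Tmax → ‖δ t‖ ≤ C₀)
    (m : ℝ → ℝ) (hm0 : m 0 = 0) (hmnn : ∀ t, 0 ≤ m t)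
    (hmono : MonotoneOn m (Set.Icc 0 Tmax)) (hmc : ContinuousOn m (Set.Icc 0 Tmax))
    (hest : ∀ s t : ℝ, 0 < s → 0 ≤ t → s + t ≤ Tmax → ‖δ2 s t - δ s‖ ≤ m t)
    (hdecomp : ∀ a b : ℝ, 0 < a → 0 < b → a + b ≤ Tmax →
      δ (a + b) = (a / (a + b)) • δ a + (b / (a + b)) • δ2 b a) :
    ∀ t h : ℝ, 0 < h → h ≤ t → t ≤ Tmax →
      ‖δ t - δ h‖ ≤ m t + 2 * C₀ * (t - (⌊t / h⌋₊ : ℝ) * h) / t :=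
  stmt_12_general Tmax δ δ2 C₀ hbound m hmnn hmono hest hdecomp
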